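/- arXiv:2510.15720 — 3 statements merged into one kernel-verified Lean document; each statement's English description precedes it below -/
import Mathlib

section
/- Let 0 < γ < 1 and Δ ≥ 0. Define sequences f and g by f(1) = γΔ, g(1) = γΔ, and for n ≥ 2, f(n) = 2γΔ + γ·f(n-1) and g(n) = max(2γΔ + γ·g(n-1), 3γΔ + γ·f(n-1)). Then for all n ≥ 1, f(n) ≤ 2Δ·(γ/(1-γ)) and g(n) ≤ 3Δ·(γ/(1-γ)). -/
theorem stmt_0 (γ Δ : ℝ) (hγ0 : 0 < γ) (hγ1 : γ < 1) (hΔ : 0 ≤ Δ)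
    (f g : ℕ → ℝ) (hf1 : f 1 = γ * Δ) (hg1 : g 1 = γ * Δ)
    (hf : ∀ n, 2 ≤ n → f n = 2 * γ * Δ + γ * f (n - 1))
    (hg : ∀ n, 2 ≤ n → g n = max (2 * γ * Δ + γ * g (n - 1)) (3 * γ * Δ + γ * f (n - 1))) :
    ∀ n, 1 ≤ n → f n ≤ 2 * Δ * (γ / (1 - γ)) ∧ g n ≤ 3 * Δ * (γ / (1 - γ)) := by
  have h1γ : 0 < 1 - γ := by linarith
  have hB : γ / (1 - γ) ≥ γ := by
    rw [ge_iff_le, le_div_iff₀ h1γ]; nlinarith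
  have key : γ + γ * (γ / (1 - γ)) = γ / (1 - γ) := by
    field_simp; ring
  intro n hn
  induction n, hn using Nat.le_induction with
  | base =>
    constructor
    · rw [hf1]; nlinarith [mul_le_mul_of_nonneg_left hB hΔ]
    · rw [hg1]; nlinarith [mul_le_mul_of_nonneg_left hB hΔ]
  | succ n hn ih =>
    obtain ⟨ihf, ihg⟩ := ih
    have h2 : 2 ≤ n + 1 := by omega
    have hs : n + 1 - 1 = n := by omega
    have hBnn : 0 ≤ γ / (1 - γ) := div_nonneg hγ0.le h1γ.le
    constructor
    · rw [hf n.succ h2, hs]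
      nlinarith [mul_le_mul_of_nonneg_left ihf hγ0.le]
    · rw [hg n.succ h2, hs]
      apply max_le
      · nlinarith [mul_le_mul_of_nonneg_left ihg hγ0.le]
      · nlinarith [mul_le_mul_of_nonneg_left ihf hγ0.le, mul_nonneg hΔ hBnn]
end

section
/- Let A be a nonempty finite set, y : A → ℝ, x ∈ ℝ, 0 < γ < 1, and let D(x,y) = { z : A → ℝ | (∀a, z(a) ≥ 0) ∧ Σ_a z(a)·y(a) ≤ x/γ ∧ Σ_a z(a) = 1 } be nonempty. Then every extreme point of D(x,y) is of the form λ·δ_a + (1-λ)·δ_{a'} for some a, a' ∈ A and λ ∈ [0,1], where δ_a denotes the indicator function of {a}. -/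
/-!
An extreme point `z` of `{w ≥ 0 | ∑ w a • v a ∈ C}`, with `v a` in a finite-dimensional space `V`,
has at most `dim V` nonzero coordinates: otherwise the `v a` on the support of `z` satisfy a
nontrivial linear relation `d`, and `z ± ε d` stay in the set for small `ε > 0`, exhibiting `z`
as a midpoint. Here `v a = (1, y a) ∈ ℝ²` encodes both the normalisation and the half-space, so
an extreme point of `D(x, y)` is supported on at most two points of `A`.
-/

open Finset Module Topology

theorem eq_zero_of_add_mem_of_sub_mem_of_mem_extremePoints {𝕜 E : Type*} [Field 𝕜]
    [LinearOrder 𝕜] [IsStrictOrderedRing 𝕜] [AddCommGroup E] [Module 𝕜 E] {s : Set E} {x d : E}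
    (hx : x ∈ s.extremePoints 𝕜) (hadd : x + d ∈ s) (hsub : x - d ∈ s) : d = 0 := by
  have hmid : x ∈ openSegment 𝕜 (x - d) (x + d) :=
    ⟨1 / 2, 1 / 2, by norm_num, by norm_num, by norm_num, by module⟩
  simpa using hx.2 hsub hadd hmid

theorem exists_pos_forall_abs_mul_le {ι : Type*} [Finite ι] {z d : ι → ℝ}
    (hz : ∀ i, 0 ≤ z i) (hd : ∀ i, z i = 0 → d i = 0) :
    ∃ ε > 0, ∀ i, |ε * d i| ≤ z i := by
  have hev : ∀ i, ∀ᶠ ε in 𝓝 (0 : ℝ), |ε * d i| ≤ z i := by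
    intro i
    rcases (hz i).eq_or_lt with hzi | hzi
    · simp [hd i hzi.symm, ← hzi]
    · have hlim : Filter.Tendsto (fun ε : ℝ => |ε * d i|) (𝓝 0) (𝓝 0) := by
        simpa using ((continuous_id.mul continuous_const).abs.tendsto (0 : ℝ))
      exact (hlim.eventually (gt_mem_nhds hzi)).mono fun _ => le_of_lt
  obtain ⟨ε, hε, hεpos⟩ :=
    ((Filter.eventually_all.2 hev).filter_mono nhdsWithin_le_nhds |>.and
      (self_mem_nhdsWithin (s := Set.Ioi 0))).exists
  exact ⟨ε, hεpos, hε⟩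

theorem exists_ne_zero_sum_smul_eq_zero_of_finrank_lt_card {ι K V : Type*} [Field K]
    [AddCommGroup V] [Module K V] [FiniteDimensional K V] [Fintype ι] (v : ι → V)
    {S : Finset ι} (hS : finrank K V < #S) :
    ∃ d : ι → K, (∀ i ∉ S, d i = 0) ∧ ∑ i, d i • v i = 0 ∧ d ≠ 0 := by
  classical
  have hdep : ¬LinearIndepOn K v (S : Set ι) := fun hind =>
    hS.not_ge (by simpa using hind.fintype_card_le_finrank)
  obtain ⟨f, hf, i, hi, hfi⟩ := not_linearIndepOn_finset_iff.1 hdep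
  refine ⟨fun j => if j ∈ S then f j else 0, fun j hj => if_neg hj, ?_, ?_⟩
  · simpa [ite_smul, Finset.sum_ite_mem] using hf
  · exact fun h => hfi (by simpa [hi] using congrFun h i)

theorem ncard_support_le_finrank_of_mem_extremePoints {ι V : Type*} [Fintype ι]
    [AddCommGroup V] [Module ℝ V] [FiniteDimensional ℝ V] (v : ι → V) (C : Set V) {z : ι → ℝ}
    (hz : z ∈ {w : ι → ℝ | (∀ i, 0 ≤ w i) ∧ ∑ i, w i • v i ∈ C}.extremePoints ℝ) :
    (Function.support z).ncard ≤ finrank ℝ V := by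
  by_contra! hcard
  rw [Set.ncard_eq_toFinset_card _ (Set.toFinite _)] at hcard
  obtain ⟨d, hdS, hdv, hd0⟩ := exists_ne_zero_sum_smul_eq_zero_of_finrank_lt_card v hcard
  obtain ⟨hznn, hzC⟩ := hz.1
  obtain ⟨ε, hε, hεd⟩ := exists_pos_forall_abs_mul_le hznn fun i hzi =>
    hdS i (by simpa using hzi)
  have hmem : ∀ t : ℝ, |t| = ε →
      z + t • d ∈ {w : ι → ℝ | (∀ i, 0 ≤ w i) ∧ ∑ i, w i • v i ∈ C} := by
    intro t ht
    refine ⟨fun i => ?_, ?_⟩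
    · have hti : |t * d i| ≤ z i := by
        rw [abs_mul, ht, ← abs_of_pos hε, ← abs_mul]
        exact hεd i
      simp only [Pi.add_apply, Pi.smul_apply, smul_eq_mul]
      linarith [neg_abs_le (t * d i)]
    · simpa [add_smul, Finset.sum_add_distrib, mul_smul, ← Finset.smul_sum, hdv] using hzC
  have := eq_zero_of_add_mem_of_sub_mem_of_mem_extremePoints hz (hmem ε (abs_of_pos hε))
    (by simpa [sub_eq_add_neg] using hmem (-ε) (by simp [hε.le]))
  exact hd0 ((smul_eq_zero.1 this).resolve_left hε.ne')

theorem Set.exists_subset_pair_of_ncard_le_two {α : Type*} [Nonempty α] {s : Set α}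
    (h : s.ncard ≤ 2) (hs : s.Finite := by toFinite_tac) : ∃ a b, s ⊆ {a, b} := by
  rcases s.eq_empty_or_nonempty with rfl | ⟨a, ha⟩
  · exact ⟨Classical.arbitrary α, Classical.arbitrary α, Set.empty_subset _⟩
  have hrest : (s \ {a}).ncard ≤ 1 := by
    rw [Set.ncard_sdiff_singleton_of_mem ha]; omega
  obtain ⟨b, hb⟩ := (Set.ncard_le_one_iff_subset_singleton hs.sdiff).1 hrest
  refine ⟨a, b, fun c hc => ?_⟩
  by_cases hca : c = a
  · exact Or.inl hca
  · exact Or.inr (hb ⟨hc, hca⟩)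

theorem exists_eq_convex_comb_of_support_subset_pair {ι : Type*} [Fintype ι] [DecidableEq ι]
    {z : ι → ℝ} (hz : ∀ i, 0 ≤ z i) (hsum : ∑ i, z i = 1) {a b : ι}
    (hab : Function.support z ⊆ {a, b}) :
    ∃ l ∈ Set.Icc (0 : ℝ) 1, z = fun i => l * (if i = a then 1 else 0) +
      (1 - l) * (if i = b then 1 else 0) := by
  have hzero : ∀ i, i ≠ a → i ≠ b → z i = 0 := fun i hia hib =>
    Function.notMem_support.1 fun hi => (hab hi).elim hia hib
  have hpair : ∑ i ∈ {a, b}, z i = 1 := by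
    rw [← hsum]
    exact Finset.sum_subset (Finset.subset_univ _) fun i _ hi => by
      simp only [Finset.mem_insert, Finset.mem_singleton, not_or] at hi
      exact hzero i hi.1 hi.2
  refine ⟨z a, ⟨hz a, ?_⟩, funext fun i => ?_⟩
  · rw [← hsum]; exact Finset.single_le_sum (fun i _ => hz i) (Finset.mem_univ a)
  rcases eq_or_ne a b with rfl | hne
  · simp only [Finset.mem_singleton, Finset.insert_eq_of_mem, Finset.sum_singleton] at hpair
    by_cases hia : i = a <;> simp [hia, hpair, hzero]
  · rw [Finset.sum_pair hne] at hpair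
    by_cases hia : i = a
    · simp [hia, hne]
    by_cases hib : i = b
    · simp [hib, hne.symm]; linarith
    simp [hia, hib, hzero i hia hib]

theorem stmt_6_general {A : Type*} [Fintype A] [Nonempty A] [DecidableEq A]
    (y : A → ℝ) (x γ : ℝ)
    (D : Set (A → ℝ))
    (hD : D = {z : A → ℝ |
      (∀ a, 0 ≤ z a) ∧ (∑ a, z a * y a) ≤ x / γ ∧ (∑ a, z a) = 1}) :
    ∀ z ∈ Set.extremePoints ℝ D, ∃ (a a' : A) (l : ℝ), l ∈ Set.Icc (0 : ℝ) 1 ∧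
      z = fun b => l * (if b = a then (1 : ℝ) else 0) +
        (1 - l) * (if b = a' then (1 : ℝ) else 0) := by
  intro z hz
  have hDprod : D = {w : A → ℝ | (∀ a, 0 ≤ w a) ∧
      ∑ a, w a • ((1 : ℝ), y a) ∈ {p : ℝ × ℝ | p.2 ≤ x / γ ∧ p.1 = 1}} := by
    ext w; simp [hD, Prod.fst_sum, Prod.snd_sum]
  have hcard := ncard_support_le_finrank_of_mem_extremePoints _ _ (hDprod ▸ hz)
  rw [finrank_prod, finrank_self] at hcard
  obtain ⟨a, a', hsupp⟩ := Set.exists_subset_pair_of_ncard_le_two hcard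
  obtain ⟨hnn, -, hsum⟩ := hD ▸ hz.1
  obtain ⟨l, hl, rfl⟩ := exists_eq_convex_comb_of_support_subset_pair hnn hsum hsupp
  exact ⟨a, a', l, hl, rfl⟩

theorem stmt_6 {A : Type*} [Fintype A] [Nonempty A] [DecidableEq A]
    (y : A → ℝ) (x γ : ℝ) (hγ0 : 0 < γ) (hγ1 : γ < 1)
    (D : Set (A → ℝ))
    (hD : D = {z : A → ℝ |
      (∀ a, 0 ≤ z a) ∧ (∑ a, z a * y a) ≤ x / γ ∧ (∑ a, z a) = 1})
    (hne : D.Nonempty) :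
    ∀ z ∈ Set.extremePoints ℝ D, ∃ (a a' : A) (l : ℝ), l ∈ Set.Icc (0 : ℝ) 1 ∧
      z = fun b => l * (if b = a then (1 : ℝ) else 0) +
        (1 - l) * (if b = a' then (1 : ℝ) else 0) :=
  stmt_6_general y x γ D hD
end

section
/- Let λ = clip((ρy₁ + (1−ρ)y₂ − x)/(relu(ρy₁ + (1−ρ)y₂ − q) + η), 0, 1) where ρ ∈ [0,1], y₁, y₂, x, q ∈ ℝ, η > 0, clip(u,0,1) = max(0, min(1,u)), and relu(u) = max(0,u). If q ≤ min(y₁, y₂) and ρy₁ + (1−ρ)y₂ > x ≥ q, then as η → 0⁺, (1−λ)·(ρy₁ + (1−ρ)y₂) + λ·q → min(ρy₁ + (1−ρ)y₂, x), and for every η > 0 one has (1−λ)·(ρy₁+(1−ρ)y₂) + λq ≥ x. -/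
/-!
Write `m = ρ y₁ + (1 - ρ) y₂` for the mixed risk. Since `q ≤ x < m`, the relu is inactive and
the clip never binds: `λ η = (m - x) / (m - q + η)`.
The mixed risk is then `x + (m - x) η / (m - q + η)`, which exceeds the budget `x` by a
nonnegative amount that vanishes as `η → 0⁺`.
-/

open Filter Topology

lemma clip_div_relu_add_eq {m x q η : ℝ} (hxm : x ≤ m) (hqx : q ≤ x) (hη : 0 < η) :
    max 0 (min 1 ((m - x) / (max 0 (m - q) + η))) = (m - x) / (m - q + η) := by
  have hden : 0 < m - q + η := by linarith
  rw [max_eq_right (by linarith : 0 ≤ m - q),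
    min_eq_right ((div_le_one hden).2 (by linarith)),
    max_eq_right (div_nonneg (by linarith) hden.le)]

lemma mix_div_add_eq {m x q η : ℝ} (hden : m - q + η ≠ 0) :
    (1 - (m - x) / (m - q + η)) * m + (m - x) / (m - q + η) * q
      = x + (m - x) * (η / (m - q + η)) := by
  field_simp
  ring

lemma tendsto_div_const_add_nhds_zero {d : ℝ} (hd : d ≠ 0) :
    Tendsto (fun η : ℝ => η / (d + η)) (𝓝 0) (𝓝 0) := by
  have hcont : ContinuousAt (fun η : ℝ => η / (d + η)) 0 :=
    continuousAt_id.div (continuousAt_const.add continuousAt_id) (by simpa using hd)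
  simpa using hcont.tendsto

theorem stmt_15_general (ρ y₁ y₂ x q : ℝ) (hm : x < ρ * y₁ + (1 - ρ) * y₂) (hxq : q ≤ x) :
    let lam : ℝ → ℝ := fun η =>
      max 0 (min 1 ((ρ * y₁ + (1 - ρ) * y₂ - x) /
        (max 0 (ρ * y₁ + (1 - ρ) * y₂ - q) + η)))
    let F : ℝ → ℝ := fun η =>
      (1 - lam η) * (ρ * y₁ + (1 - ρ) * y₂) + lam η * q
    Filter.Tendsto F (nhdsWithin 0 (Set.Ioi 0))
        (nhds (min (ρ * y₁ + (1 - ρ) * y₂) x)) ∧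
      ∀ η > (0 : ℝ), x ≤ F η := by
  intro lam F
  set m := ρ * y₁ + (1 - ρ) * y₂
  have hF : ∀ η > (0 : ℝ), F η = x + (m - x) * (η / (m - q + η)) := fun η hη => by
    simp only [F, lam]
    rw [clip_div_relu_add_eq hm.le hxq hη, mix_div_add_eq (by linarith)]
  refine ⟨?_, fun η hη => ?_⟩
  · have hlim : Tendsto (fun η => x + (m - x) * (η / (m - q + η))) (𝓝[>] 0) (𝓝 x) := by
      simpa using (tendsto_div_const_add_nhds_zero (by linarith : m - q ≠ 0)).mono_left
        nhdsWithin_le_nhds |>.const_mul (m - x) |>.const_add x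
    rw [min_eq_right hm.le]
    have hFeq : (fun η => x + (m - x) * (η / (m - q + η))) =ᶠ[𝓝[>] 0] F :=
      eventually_nhdsWithin_of_forall fun η hη => (hF η hη).symm
    exact hlim.congr' hFeq
  · rw [hF η hη]
    have : 0 ≤ (m - x) * (η / (m - q + η)) :=
      mul_nonneg (by linarith) (div_nonneg hη.le (by linarith))
    linarith

theorem stmt_15 (ρ y₁ y₂ x q : ℝ) (hρ : ρ ∈ Set.Icc (0 : ℝ) 1)
    (hq : q ≤ min y₁ y₂) (hm : x < ρ * y₁ + (1 - ρ) * y₂) (hxq : q ≤ x) :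
    let lam : ℝ → ℝ := fun η =>
      max 0 (min 1 ((ρ * y₁ + (1 - ρ) * y₂ - x) /
        (max 0 (ρ * y₁ + (1 - ρ) * y₂ - q) + η)))
    let F : ℝ → ℝ := fun η =>
      (1 - lam η) * (ρ * y₁ + (1 - ρ) * y₂) + lam η * q
    Filter.Tendsto F (nhdsWithin 0 (Set.Ioi 0))
        (nhds (min (ρ * y₁ + (1 - ρ) * y₂) x)) ∧
      ∀ η > (0 : ℝ), x ≤ F η :=
  stmt_15_general ρ y₁ y₂ x q hm hxq
end
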